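/- For all n ≥ 1, 4·Σ_{i=1}^n i·D_i = n·D_{n+1} - (n+1)·D_n + 2, where D_n is the n-th double Lucas-balancing number. -/
import Mathlib


def dlb : ℕ → ℤ
  | 0 => 2
  | 1 => 6
  | n + 2 => 6 * dlb (n + 1) - dlb n

theorem stmt18 (n : ℕ) (hn : 1 ≤ n) :
    4 * (∑ i ∈ Finset.Icc 1 n, (i : ℤ) * dlb i) =
      (n : ℤ) * dlb (n + 1) - ((n : ℤ) + 1) * dlb n + 2 := by
  induction n with
  | zero => omega
  | succ n ih =>
    rcases Nat.eq_zero_or_pos n with rfl | hn'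
    · simp [dlb]
    · rw [Finset.sum_Icc_succ_top (by omega), mul_add, ih hn', show n + 1 + 1 = n + 2 from rfl,
        dlb]
      push_cast
      ring
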